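/- arXiv:1210.5664 — 4 statements merged into one kernel-verified Lean document; each statement's English description precedes it below -/
import Mathlib

section
/- The Single-Linkage partitioning function satisfies k-Richness: for every k-partitioning Γ of S = {1,...,n} with 1 ≤ k ≤ n, there exists a similarity function s with SL(s,k) = Γ. -/
noncomputable section

open Finset

/-- `s` is a similarity function: symmetric and positive off the diagonal. -/
def Sim {n : ℕ} (s : Fin n → Fin n → ℝ) : Prop :=
  (∀ i j, s i j = s j i) ∧ ∀ i j, i ≠ j → 0 < s i j

/-- The cluster of a clustering `C` containing the point `i`. -/
def clusterOf {n : ℕ} (C : Finset (Finset (Fin n))) (i : Fin n) : Finset (Fin n) :=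
  (C.filter fun c => i ∈ c).sup id

/-- All ordered pairs of points lying in different clusters of `C`, tagged with
their similarity, ordered lexicographically by (similarity, pair). -/
def interPairs {n : ℕ} (s : Fin n → Fin n → ℝ) (C : Finset (Finset (Fin n))) :
    Finset (ℝ ×ₗ (Fin n ×ₗ Fin n)) :=
  (Finset.univ.filter fun p : Fin n × Fin n => clusterOf C p.1 ≠ clusterOf C p.2).image
    fun p => toLex (s p.1 p.2, toLex p)

/-- One agglomerative step of Single-Linkage: merge the two clusters joined by
the largest-similarity inter-cluster edge (ties broken by a fixed order on pairs). -/
def slStep {n : ℕ} (s : Fin n → Fin n → ℝ) (C : Finset (Finset (Fin n))) :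
    Finset (Finset (Fin n)) :=
  match (interPairs s C).max with
  | none => C
  | some m =>
      let p := ofLex (ofLex m).2
      insert (clusterOf C p.1 ∪ clusterOf C p.2)
        ((C.erase (clusterOf C p.1)).erase (clusterOf C p.2))

/-- The Single-Linkage `k`-partitioning: start from singletons and merge `n - k` times. -/
def SL {n : ℕ} (s : Fin n → Fin n → ℝ) (k : ℕ) : Finset (Finset (Fin n)) :=
  (slStep s)^[n - k] (Finset.univ.image fun i => ({i} : Finset (Fin n)))


/-- `Γ` is a `k`-partitioning of `{1,…,n}`. -/
def IsKPartition {n : ℕ} (Γ : Finset (Finset (Fin n))) (k : ℕ) : Prop :=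
  Γ.card = k ∧ (∀ c ∈ Γ, c.Nonempty) ∧
    (∀ c ∈ Γ, ∀ c' ∈ Γ, c ≠ c' → Disjoint c c') ∧ Γ.sup id = Finset.univ


/-!
Take `s` to be `2` on pairs inside a block of `Γ` and `1` on pairs across blocks. Every
clustering that Single-Linkage passes through then refines `Γ`: while there are more than `k`
clusters, two of them lie in a common block (pigeonhole), so the largest inter-cluster similarity
is `2` and the two merged clusters lie in one block. After `n - k` merges exactly `k` clusters
remain, and a refinement of `Γ` with as many parts as `Γ` is `Γ` itself.
-/

namespace SingleLinkage

section Partition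

variable {α : Type*} [DecidableEq α] {C Γ : Finset (Finset α)}

def Refines (C Γ : Finset (Finset α)) : Prop := ∀ c ∈ C, ∃ g ∈ Γ, c ⊆ g

def merge (C : Finset (Finset α)) (A B : Finset α) : Finset (Finset α) :=
  insert (A ∪ B) ((C.erase A).erase B)

theorem mem_merge {C : Finset (Finset α)} {A B d : Finset α} :
    d ∈ merge C A B ↔ d = A ∪ B ∨ (d ∈ C ∧ d ≠ A ∧ d ≠ B) := by
  simp only [merge, mem_insert, mem_erase]
  tauto

theorem Refines.exists_ne_subset_of_card_lt (h : Refines C Γ) (hcard : Γ.card < C.card) :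
    ∃ c ∈ C, ∃ c' ∈ C, c ≠ c' ∧ ∃ g ∈ Γ, c ⊆ g ∧ c' ⊆ g := by
  by_contra! H
  refine hcard.not_ge <| card_le_card_of_forall_subsingleton (· ⊆ ·) (fun c hc => h c hc)
    fun g hg c hc c' hc' => ?_
  by_contra hne
  exact H c hc.1 c' hc'.1 hne g hg hc.2 hc'.2

theorem Refines.merge (h : Refines C Γ) {A B g : Finset α} (hg : g ∈ Γ) (hA : A ⊆ g)
    (hB : B ⊆ g) : Refines (merge C A B) Γ := by
  intro d hd
  rcases mem_merge.1 hd with rfl | ⟨hd, -⟩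
  · exact ⟨g, hg, union_subset hA hB⟩
  · exact h d hd

variable [Fintype α]

structure IsPartition (C : Finset (Finset α)) : Prop where
  nonempty : ∀ c ∈ C, c.Nonempty
  disjoint : ∀ c ∈ C, ∀ c' ∈ C, c ≠ c' → Disjoint c c'
  sup_eq_univ : C.sup id = univ

def singletons (α : Type*) [Fintype α] [DecidableEq α] : Finset (Finset α) :=
  univ.image fun i => {i}

namespace IsPartition

theorem exists_mem (hC : IsPartition C) (i : α) : ∃ c ∈ C, i ∈ c := by
  simpa using (hC.sup_eq_univ.symm ▸ mem_univ i : i ∈ C.sup id)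

theorem eq_of_mem_of_mem (hC : IsPartition C) {c c' : Finset α} (hc : c ∈ C) (hc' : c' ∈ C)
    {i : α} (hi : i ∈ c) (hi' : i ∈ c') : c = c' := by
  by_contra hne
  exact disjoint_left.1 (hC.disjoint c hc c' hc' hne) hi hi'

theorem eq_of_subset_of_subset (hC : IsPartition C) {c c' : Finset α} (hc : c ∈ C)
    (hc' : c' ∈ C) {d : Finset α} (hd : d.Nonempty) (hdc : d ⊆ c) (hdc' : d ⊆ c') : c = c' :=
  hC.eq_of_mem_of_mem hc hc' (hdc hd.choose_spec) (hdc' hd.choose_spec)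

theorem merge {A B : Finset α} (hC : IsPartition C) (hA : A ∈ C) (hB : B ∈ C) :
    IsPartition (merge C A B) := by
  have hdisj : ∀ d ∈ C, d ≠ A → d ≠ B → Disjoint (A ∪ B) d := fun d hd hdA hdB =>
    disjoint_union_left.2 ⟨hC.disjoint A hA d hd hdA.symm, hC.disjoint B hB d hd hdB.symm⟩
  refine ⟨fun d hd => ?_, fun d hd d' hd' hne => ?_, eq_univ_iff_forall.2 fun i => ?_⟩
  · rcases mem_merge.1 hd with rfl | ⟨hd, -⟩
    · exact (hC.nonempty A hA).mono subset_union_left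
    · exact hC.nonempty d hd
  · rcases mem_merge.1 hd with rfl | ⟨hd, hdA, hdB⟩ <;>
      rcases mem_merge.1 hd' with rfl | ⟨hd', hd'A, hd'B⟩
    · exact absurd rfl hne
    · exact hdisj d' hd' hd'A hd'B
    · exact (hdisj d hd hdA hdB).symm
    · exact hC.disjoint d hd d' hd' hne
  · obtain ⟨c, hc, hic⟩ := hC.exists_mem i
    refine mem_sup.2 ?_
    by_cases hcAB : c = A ∨ c = B
    · refine ⟨A ∪ B, mem_merge.2 (Or.inl rfl), ?_⟩
      rcases hcAB with rfl | rfl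
      exacts [mem_union_left _ hic, mem_union_right _ hic]
    · push Not at hcAB
      exact ⟨c, mem_merge.2 (Or.inr ⟨hc, hcAB⟩), hic⟩

theorem card_merge {A B : Finset α} (hC : IsPartition C) (hA : A ∈ C) (hB : B ∈ C)
    (hAB : A ≠ B) : (SingleLinkage.merge C A B).card + 1 = C.card := by
  have hunion : A ∪ B ∉ (C.erase A).erase B := by
    simp only [mem_erase, not_and]
    intro _ hne hmem
    obtain ⟨i, hi⟩ := hC.nonempty A hA
    exact disjoint_left.1 (hC.disjoint _ hmem A hA hne) (mem_union_left B hi) hi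
  rw [SingleLinkage.merge, card_insert_of_notMem hunion,
    card_erase_of_mem (mem_erase.2 ⟨hAB.symm, hB⟩), card_erase_of_mem hA]
  have := one_lt_card.2 ⟨A, hA, B, hB, hAB⟩
  omega

theorem singletons : IsPartition (singletons α) := by
  refine ⟨?_, ?_, eq_univ_iff_forall.2 fun i => mem_sup.2 ⟨{i}, mem_image_of_mem _ (mem_univ i),
    mem_singleton_self i⟩⟩
  · simp [SingleLinkage.singletons]
  · simp only [SingleLinkage.singletons, mem_image, mem_univ, true_and]
    rintro _ ⟨i, rfl⟩ _ ⟨j, rfl⟩ hij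
    exact disjoint_singleton.2 fun h => hij (h ▸ rfl)

end IsPartition

theorem card_singletons : (singletons α).card = Fintype.card α := by
  rw [singletons, card_image_of_injective _ singleton_injective, card_univ]

theorem Refines.exists_mem_subset (hC : IsPartition C) (hΓ : IsPartition Γ) (h : Refines C Γ)
    {g : Finset α} (hg : g ∈ Γ) {x : α} (hx : x ∈ g) : ∃ c ∈ C, x ∈ c ∧ c ⊆ g := by
  obtain ⟨c, hc, hxc⟩ := hC.exists_mem x
  obtain ⟨g', hg', hcg'⟩ := h c hc
  exact ⟨c, hc, hxc, hΓ.eq_of_mem_of_mem hg' hg (hcg' hxc) hx ▸ hcg'⟩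

theorem Refines.eq_of_card_eq (hC : IsPartition C) (hΓ : IsPartition Γ)
    (h : Refines C Γ) (hcard : C.card = Γ.card) : C = Γ := by
  refine eq_of_subset_of_card_le (fun c hc => ?_) hcard.ge
  obtain ⟨g, hg, hcg⟩ := h c hc
  suffices c = g from this ▸ hg
  -- Otherwise `g` contains a second cluster `c'`, so the clusters other than `c` still meet
  -- every block of `Γ`, and `Γ` has fewer parts than `C`.
  by_contra hne
  obtain ⟨x, hxg, hxc⟩ := exists_of_ssubset (ssubset_of_subset_of_ne hcg hne)
  obtain ⟨c', hc', hxc', hc'g⟩ := h.exists_mem_subset hC hΓ hg hxg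
  have hcover : ∀ g' ∈ Γ, ∃ d ∈ C.erase c, d ⊆ g' := by
    intro g' hg'
    obtain ⟨y, hy⟩ := hΓ.nonempty g' hg'
    obtain ⟨d, hd, -, hdg'⟩ := h.exists_mem_subset hC hΓ hg' hy
    by_cases hdc : d = c
    · subst hdc
      rw [← hΓ.eq_of_subset_of_subset hg hg' (hC.nonempty d hd) hcg hdg']
      exact ⟨c', mem_erase.2 ⟨fun h => hxc (h ▸ hxc'), hc'⟩, hc'g⟩
    · exact ⟨d, mem_erase.2 ⟨hdc, hd⟩, hdg'⟩
  have := card_le_card_of_forall_subsingleton' (· ⊆ ·) hcover fun d hd g₁ hg₁ g₂ hg₂ =>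
    hΓ.eq_of_subset_of_subset hg₁.1 hg₂.1 (hC.nonempty d (mem_of_mem_erase hd)) hg₁.2 hg₂.2
  rw [card_erase_of_mem hc] at this
  have := card_pos.2 ⟨c, hc⟩
  omega

end Partition

variable {n : ℕ} {C Γ : Finset (Finset (Fin n))}

namespace IsPartition

theorem clusterOf_eq (hC : IsPartition C) {c : Finset (Fin n)} (hc : c ∈ C) {i : Fin n}
    (hi : i ∈ c) : clusterOf C i = c := by
  have : C.filter (i ∈ ·) = {c} :=
    eq_singleton_iff_unique_mem.2 ⟨mem_filter.2 ⟨hc, hi⟩,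
      fun d hd => hC.eq_of_mem_of_mem (mem_filter.1 hd).1 hc (mem_filter.1 hd).2 hi⟩
  rw [clusterOf, this, sup_singleton, id]

theorem clusterOf_mem (hC : IsPartition C) (i : Fin n) : clusterOf C i ∈ C := by
  obtain ⟨c, hc, hi⟩ := hC.exists_mem i
  rwa [hC.clusterOf_eq hc hi]

theorem mem_clusterOf (hC : IsPartition C) (i : Fin n) : i ∈ clusterOf C i := by
  obtain ⟨c, hc, hi⟩ := hC.exists_mem i
  rwa [hC.clusterOf_eq hc hi]

end IsPartition

theorem Refines.clusterOf_subset (hC : IsPartition C) (hΓ : IsPartition Γ) (h : Refines C Γ)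
    (i : Fin n) : clusterOf C i ⊆ clusterOf Γ i := by
  obtain ⟨g, hg, hcg⟩ := h _ (hC.clusterOf_mem i)
  rwa [hΓ.clusterOf_eq hg (hcg (hC.mem_clusterOf i))]

theorem exists_slStep_eq_merge (s : Fin n → Fin n → ℝ) {i j : Fin n}
    (hij : clusterOf C i ≠ clusterOf C j) :
    ∃ p : Fin n × Fin n, clusterOf C p.1 ≠ clusterOf C p.2 ∧ s i j ≤ s p.1 p.2 ∧
      slStep s C = merge C (clusterOf C p.1) (clusterOf C p.2) := by
  have hmem : toLex (s i j, toLex (i, j)) ∈ interPairs s C :=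
    mem_image.2 ⟨(i, j), mem_filter.2 ⟨mem_univ _, hij⟩, rfl⟩
  obtain ⟨m, hmax⟩ := max_of_mem hmem
  obtain ⟨p, hp, rfl⟩ := mem_image.1 (mem_of_max hmax)
  refine ⟨p, (mem_filter.1 hp).2, ?_, by rw [slStep, hmax]; rfl⟩
  have hle := le_max hmem
  rw [hmax, WithBot.coe_le_coe] at hle
  exact (Prod.Lex.monotone_fst _ _ hle : _)

theorem SL_eq_iterate (s : Fin n → Fin n → ℝ) (k : ℕ) :
    SL s k = (slStep s)^[n - k] (singletons (Fin n)) :=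
  rfl

def blockSim (Γ : Finset (Finset (Fin n))) (i j : Fin n) : ℝ :=
  if clusterOf Γ i = clusterOf Γ j then 2 else 1

theorem sim_blockSim (Γ : Finset (Finset (Fin n))) : Sim (blockSim Γ) := by
  refine ⟨fun i j => ?_, fun i j _ => ?_⟩ <;> unfold blockSim
  · simp only [eq_comm]
  · split_ifs <;> norm_num

theorem clusterOf_eq_of_two_le_blockSim {i j : Fin n} (h : 2 ≤ blockSim Γ i j) :
    clusterOf Γ i = clusterOf Γ j := by
  by_contra hne
  rw [blockSim, if_neg hne] at h
  norm_num at h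

theorem slStep_blockSim (hΓ : IsPartition Γ) (hC : IsPartition C) (hCΓ : Refines C Γ)
    (hcard : Γ.card < C.card) :
    IsPartition (slStep (blockSim Γ) C) ∧ Refines (slStep (blockSim Γ) C) Γ ∧
      (slStep (blockSim Γ) C).card + 1 = C.card := by
  obtain ⟨c, hc, c', hc', hne, g, hg, hcg, hc'g⟩ := hCΓ.exists_ne_subset_of_card_lt hcard
  obtain ⟨i, hi⟩ := hC.nonempty c hc
  obtain ⟨j, hj⟩ := hC.nonempty c' hc'
  have hij : clusterOf C i ≠ clusterOf C j := by
    rwa [hC.clusterOf_eq hc hi, hC.clusterOf_eq hc' hj]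
  have hsim : blockSim Γ i j = 2 := by
    rw [blockSim, if_pos (by rw [hΓ.clusterOf_eq hg (hcg hi), hΓ.clusterOf_eq hg (hc'g hj)])]
  -- The merged pair realises the maximal similarity `2`, so it lies within one block of `Γ`.
  obtain ⟨⟨p, q⟩, hpq, hle, hstep⟩ := exists_slStep_eq_merge (blockSim Γ) hij
  have hΓpq := clusterOf_eq_of_two_le_blockSim (hsim ▸ hle)
  rw [hstep]
  exact ⟨hC.merge (hC.clusterOf_mem p) (hC.clusterOf_mem q),
    hCΓ.merge (hΓ.clusterOf_mem p) (hCΓ.clusterOf_subset hC hΓ p)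
      (hΓpq ▸ hCΓ.clusterOf_subset hC hΓ q),
    hC.card_merge (hC.clusterOf_mem p) (hC.clusterOf_mem q) hpq⟩

theorem iterate_slStep_blockSim (hΓ : IsPartition Γ) {t : ℕ} (ht : Γ.card + t ≤ n) :
    IsPartition ((slStep (blockSim Γ))^[t] (singletons (Fin n))) ∧
      Refines ((slStep (blockSim Γ))^[t] (singletons (Fin n))) Γ ∧
      ((slStep (blockSim Γ))^[t] (singletons (Fin n))).card + t = n := by
  induction t with
  | zero =>
    refine ⟨IsPartition.singletons, fun c hc => ?_, by simp [card_singletons]⟩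
    obtain ⟨i, -, rfl⟩ := mem_image.1 hc
    exact ⟨clusterOf Γ i, hΓ.clusterOf_mem i, singleton_subset_iff.2 (hΓ.mem_clusterOf i)⟩
  | succ t ih =>
    obtain ⟨hC, hCΓ, hcard⟩ := ih (by omega)
    rw [Function.iterate_succ_apply']
    obtain ⟨hC', hC'Γ, hcard'⟩ := slStep_blockSim hΓ hC hCΓ (by omega)
    exact ⟨hC', hC'Γ, by omega⟩

end SingleLinkage

open SingleLinkage

theorem SL_k_rich_general {n : ℕ} (k : ℕ) (hkn : k ≤ n)
    (Γ : Finset (Finset (Fin n))) (hΓ : IsKPartition Γ k) :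
    ∃ s : Fin n → Fin n → ℝ, Sim s ∧ SL s k = Γ := by
  obtain ⟨hk, hΓ⟩ : Γ.card = k ∧ IsPartition Γ := ⟨hΓ.1, hΓ.2.1, hΓ.2.2.1, hΓ.2.2.2⟩
  obtain ⟨hC, hCΓ, hcard⟩ := iterate_slStep_blockSim hΓ (t := n - k) (by omega)
  refine ⟨blockSim Γ, sim_blockSim Γ, ?_⟩
  rw [SL_eq_iterate]
  exact hCΓ.eq_of_card_eq hC hΓ (by omega)

/-- Single-Linkage satisfies k-Richness. -/
theorem SL_k_rich {n : ℕ} (k : ℕ) (hk1 : 1 ≤ k) (hkn : k ≤ n)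
    (Γ : Finset (Finset (Fin n))) (hΓ : IsKPartition Γ k) :
    ∃ s : Fin n → Fin n → ℝ, Sim s ∧ SL s k = Γ :=
  SL_k_rich_general k hkn Γ hΓ
end
end

section
/- The Max-Sum objective for k = 2 satisfies Consistency: if Γ = {A, S\A} maximizes the sum of within-cluster similarities for s, and s' is a Γ-transformation of s (within-cluster similarities weakly increased, between-cluster similarities weakly decreased), then Γ also maximizes the sum of within-cluster similarities for s'. -/
noncomputable section

open Finset

/-- The Max-Sum objective of the 2-partitioning `{A, S \ A}`:
the sum of within-cluster similarities. -/
def lam {n : ℕ} (s : Fin n → Fin n → ℝ) (A : Finset (Fin n)) : ℝ :=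
  (∑ p ∈ Finset.univ.filter
      (fun p : Fin n × Fin n => p.1 < p.2 ∧ p.1 ∈ A ∧ p.2 ∈ A), s p.1 p.2) +
  (∑ p ∈ Finset.univ.filter
      (fun p : Fin n × Fin n => p.1 < p.2 ∧ p.1 ∉ A ∧ p.2 ∉ A), s p.1 p.2)

/-- `A` determines a Max-Sum optimal 2-partitioning `{A, S \ A}` for `s`. -/
def IsMaxSum2 {n : ℕ} (s : Fin n → Fin n → ℝ) (A : Finset (Fin n)) : Prop :=
  A.Nonempty ∧ A ≠ Finset.univ ∧
    ∀ B : Finset (Fin n), B.Nonempty → B ≠ Finset.univ → lam s B ≤ lam s A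

def withinPairs {n : ℕ} (A : Finset (Fin n)) : Finset (Fin n × Fin n) :=
  univ.filter fun p => p.1 < p.2 ∧ ((p.1 ∈ A ∧ p.2 ∈ A) ∨ (p.1 ∉ A ∧ p.2 ∉ A))

lemma lam_eq_sum_withinPairs {n : ℕ} (s : Fin n → Fin n → ℝ) (A : Finset (Fin n)) :
    lam s A = ∑ p ∈ withinPairs A, s p.1 p.2 := by
  have hsplit : withinPairs A =
      univ.filter (fun p : Fin n × Fin n => p.1 < p.2 ∧ p.1 ∈ A ∧ p.2 ∈ A) ∪
      univ.filter (fun p : Fin n × Fin n => p.1 < p.2 ∧ p.1 ∉ A ∧ p.2 ∉ A) := by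
    ext p
    simp only [withinPairs, mem_union, mem_filter, mem_univ, true_and]
    tauto
  rw [hsplit, sum_union (disjoint_filter.2 fun p _ h₁ h₂ => h₂.2.1 h₁.2.1)]
  rfl

theorem Finset.sum_le_sum_of_nonneg_of_nonpos_off {ι M : Type*} [AddCommMonoid M]
    [PartialOrder M] [IsOrderedAddMonoid M] {P Q : Finset ι} {d : ι → M}
    (hP : ∀ i ∈ P, 0 ≤ d i) (hQ : ∀ i ∈ Q, i ∉ P → d i ≤ 0) :
    ∑ i ∈ Q, d i ≤ ∑ i ∈ P, d i := by
  classical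
  calc ∑ i ∈ Q, d i = ∑ i ∈ Q ∩ P, d i + ∑ i ∈ Q \ P, d i :=
        (sum_inter_add_sum_sdiff Q P d).symm
    _ ≤ ∑ i ∈ Q ∩ P, d i + 0 :=
        add_le_add_right (sum_nonpos fun i hi => hQ i (mem_sdiff.1 hi).1 (mem_sdiff.1 hi).2) _
    _ ≤ ∑ i ∈ P, d i := by
        rw [add_zero]
        exact sum_le_sum_of_subset_of_nonneg inter_subset_right fun i hi _ => hP i hi

lemma lam_sub_le_lam_sub {n : ℕ} {s s' : Fin n → Fin n → ℝ} {A : Finset (Fin n)}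
    (hin : ∀ i j, i ≠ j → ((i ∈ A ∧ j ∈ A) ∨ (i ∉ A ∧ j ∉ A)) → s i j ≤ s' i j)
    (hout : ∀ i j, i ≠ j → ¬((i ∈ A ∧ j ∈ A) ∨ (i ∉ A ∧ j ∉ A)) → s' i j ≤ s i j)
    (B : Finset (Fin n)) :
    lam s' B - lam s B ≤ lam s' A - lam s A := by
  simp only [lam_eq_sum_withinPairs, ← sum_sub_distrib]
  refine sum_le_sum_of_nonneg_of_nonpos_off (fun p hp => ?_) (fun p hpB hpA => ?_)
  · simp only [withinPairs, mem_filter, mem_univ, true_and] at hp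
    exact sub_nonneg.2 (hin _ _ hp.1.ne hp.2)
  · simp only [withinPairs, mem_filter, mem_univ, true_and, not_and] at hpB hpA
    exact sub_nonpos.2 (hout _ _ hpB.1.ne (hpA hpB.1))

theorem maxSum2_consistent_general {n : ℕ}
    (s s' : Fin n → Fin n → ℝ)
    (A : Finset (Fin n))
    (hin : ∀ i j, i ≠ j → ((i ∈ A ∧ j ∈ A) ∨ (i ∉ A ∧ j ∉ A)) → s i j ≤ s' i j)
    (hout : ∀ i j, i ≠ j → ¬((i ∈ A ∧ j ∈ A) ∨ (i ∉ A ∧ j ∉ A)) → s' i j ≤ s i j)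
    (hA : IsMaxSum2 s A) :
    IsMaxSum2 s' A := by
  obtain ⟨hne, hnu, hmax⟩ := hA
  refine ⟨hne, hnu, fun B hBne hBnu => ?_⟩
  have hgain := lam_sub_le_lam_sub hin hout B
  linarith [hmax B hBne hBnu]

/-- Max-Sum for `k = 2` satisfies Consistency: if `{A, S\A}` is optimal for `s`
and `s'` is a `{A, S\A}`-transformation of `s`, then it is optimal for `s'`. -/
theorem maxSum2_consistent {n : ℕ} (hn : 2 ≤ n)
    (s s' : Fin n → Fin n → ℝ) (hs : Sim s) (hs' : Sim s')
    (A : Finset (Fin n))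
    (hin : ∀ i j, i ≠ j → ((i ∈ A ∧ j ∈ A) ∨ (i ∉ A ∧ j ∉ A)) → s i j ≤ s' i j)
    (hout : ∀ i j, i ≠ j → ¬((i ∈ A ∧ j ∈ A) ∨ (i ∉ A ∧ j ∉ A)) → s' i j ≤ s i j)
    (hA : IsMaxSum2 s A) :
    IsMaxSum2 s' A :=
  maxSum2_consistent_general s s' A hin hout hA
end
end

section
/- The constant partitioning function (returning the first n−k+1 elements of S as one cluster and the remaining k−1 elements as singletons, regardless of s) satisfies Consistency, Scale-Invariance, MST-Consistency and MCT-Consistency, but for n > k ≥ 2 it does not satisfy k-Richness. -/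
noncomputable section

open scoped Classical

open Finset

/-- The graph on `Fin n` whose edges are the pairs in `E`. -/
def graphOf {n : ℕ} (E : Finset (Fin n × Fin n)) : SimpleGraph (Fin n) :=
  SimpleGraph.fromRel (fun i j => (i, j) ∈ E)

/-- `E` is (the canonical edge set of) a spanning tree on `Fin n`:
each edge is given once as an increasing pair, there are `n - 1` edges,
and the resulting graph is connected. -/
def IsTreeEdges {n : ℕ} (E : Finset (Fin n × Fin n)) : Prop :=
  (∀ p ∈ E, p.1 < p.2) ∧ E.card = n - 1 ∧ (graphOf E).Connected

/-- The total weight of the edge set `E` under the similarity function `s`. -/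
def wt {n : ℕ} (s : Fin n → Fin n → ℝ) (E : Finset (Fin n × Fin n)) : ℝ :=
  ∑ p ∈ E, s p.1 p.2

/-- `T` is a maximum spanning tree of the complete weighted graph determined by `s`. -/
def IsMST {n : ℕ} (s : Fin n → Fin n → ℝ) (T : Finset (Fin n × Fin n)) : Prop :=
  IsTreeEdges T ∧ ∀ T' : Finset (Fin n × Fin n), IsTreeEdges T' → wt s T' ≤ wt s T

/-- The partition of `Fin n` into connected components of the graph with edge set `E`. -/
def components {n : ℕ} (E : Finset (Fin n × Fin n)) : Finset (Finset (Fin n)) :=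
  Finset.univ.image fun i => Finset.univ.filter fun j => (graphOf E).Reachable i j

/-- `C` is a minimum-weight `k`-cut of the tree `T` with edge weights given by `w`:
removing `C` leaves exactly `k` connected components, at minimum total weight. -/
def IsMinKCut {n : ℕ} (w : Fin n × Fin n → ℝ) (T C : Finset (Fin n × Fin n))
    (k : ℕ) : Prop :=
  C ⊆ T ∧ (components (T \ C)).card = k ∧
    ∀ C' ⊆ T, (components (T \ C')).card = k → ∑ p ∈ C, w p ≤ ∑ p ∈ C', w p

/-- The cut value of the set `A` in the weighted graph given by `s`. -/
def cutVal {n : ℕ} (s : Fin n → Fin n → ℝ) (A : Finset (Fin n)) : ℝ :=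
  ∑ i ∈ A, ∑ j ∈ Finset.univ \ A, s i j

/-- `A` is a minimum `u`-`v` cut of the complete weighted graph given by `s`. -/
def IsMinUVCut {n : ℕ} (s : Fin n → Fin n → ℝ) (u v : Fin n)
    (A : Finset (Fin n)) : Prop :=
  u ∈ A ∧ v ∉ A ∧ ∀ B : Finset (Fin n), u ∈ B → v ∉ B → cutVal s A ≤ cutVal s B

/-- The connected component of `i` in the graph with edge set `E`. -/
def compOf {n : ℕ} (E : Finset (Fin n × Fin n)) (i : Fin n) : Finset (Fin n) :=
  Finset.univ.filter fun j => (graphOf E).Reachable i j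

/-- `(T, w)` is a minimum cut (Gomory–Hu) tree of `s`: for every tree edge,
the cut obtained by deleting it is a minimum cut between its endpoints, and
`w` records its value. -/
def IsMCT {n : ℕ} (s : Fin n → Fin n → ℝ) (T : Finset (Fin n × Fin n))
    (w : Fin n × Fin n → ℝ) : Prop :=
  IsTreeEdges T ∧ ∀ p ∈ T,
    IsMinUVCut s p.1 p.2 (compOf (T \ {p}) p.1) ∧
    w p = cutVal s (compOf (T \ {p}) p.1)

/-- Points `i` and `j` lie in the same cluster of `Γ`. -/
def SameCluster {n : ℕ} (Γ : Finset (Finset (Fin n))) (i j : Fin n) : Prop :=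
  ∃ c ∈ Γ, i ∈ c ∧ j ∈ c

/-- Consistency for a partitioning function with a fixed number of clusters. -/
def Consistent {n : ℕ} (F : (Fin n → Fin n → ℝ) → Finset (Finset (Fin n))) : Prop :=
  ∀ s s' : Fin n → Fin n → ℝ, Sim s → Sim s' →
    (∀ i j, i ≠ j → SameCluster (F s) i j → s i j ≤ s' i j) →
    (∀ i j, i ≠ j → ¬ SameCluster (F s) i j → s' i j ≤ s i j) →
    F s' = F s

/-- Scale-Invariance. -/
def ScaleInvariant {n : ℕ} (F : (Fin n → Fin n → ℝ) → Finset (Finset (Fin n))) : Prop :=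
  ∀ s : Fin n → Fin n → ℝ, Sim s → ∀ α : ℝ, 0 < α → F (fun i j => α * s i j) = F s

/-- MST-Consistency. -/
def MSTConsistent {n : ℕ} (k : ℕ)
    (F : (Fin n → Fin n → ℝ) → Finset (Finset (Fin n))) : Prop :=
  ∀ s s' : Fin n → Fin n → ℝ, Sim s → Sim s' →
    (∃ T T' C C' : Finset (Fin n × Fin n),
      IsMST s T ∧ IsMST s' T' ∧
      IsMinKCut (fun p => s p.1 p.2) T C k ∧ IsMinKCut (fun p => s' p.1 p.2) T' C' k ∧
      components (T \ C) = components (T' \ C')) →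
    F s = F s'

/-- MCT-Consistency: agreement whenever the minimum cut trees of `s` and `s'`
have the same minimum `k`-cut partition. -/
def MCTConsistent {n : ℕ} (k : ℕ)
    (F : (Fin n → Fin n → ℝ) → Finset (Finset (Fin n))) : Prop :=
  ∀ s s' : Fin n → Fin n → ℝ, Sim s → Sim s' →
    (∃ (T T' C C' : Finset (Fin n × Fin n)) (w w' : Fin n × Fin n → ℝ),
      IsMCT s T w ∧ IsMCT s' T' w' ∧
      IsMinKCut w T C k ∧ IsMinKCut w' T' C' k ∧
      components (T \ C) = components (T' \ C')) →
    F s = F s'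

/-- k-Richness. -/
def KRich {n : ℕ} (k : ℕ) (F : (Fin n → Fin n → ℝ) → Finset (Finset (Fin n))) : Prop :=
  ∀ Γ : Finset (Finset (Fin n)), IsKPartition Γ k →
    ∃ s : Fin n → Fin n → ℝ, Sim s ∧ F s = Γ

/-- The constant partitioning function: the first `n - k + 1` points form one
cluster and the remaining `k - 1` points are singletons, regardless of `s`. -/
def constPart (n k : ℕ) : Finset (Finset (Fin n)) :=
  insert (Finset.univ.filter fun i : Fin n => (i : ℕ) < n - k + 1)
    ((Finset.univ.filter fun i : Fin n => n - k + 1 ≤ (i : ℕ)).image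
      fun i => ({i} : Finset (Fin n)))

/-! Each of the first four axioms only ever concludes `F s = F s'` (or `F s' = F s`), which a
constant function satisfies trivially. Richness fails because the `k`-partition into
`{k-1, …, n-1}` and the singletons `{0}, …, {k-2}` has `{0}` as a cluster, whereas in
`constPart n k` the point `0` shares its cluster with `1`. -/

section Constant

variable {n : ℕ} (Γ : Finset (Finset (Fin n)))

theorem consistent_const : Consistent fun _ : Fin n → Fin n → ℝ => Γ :=
  fun _ _ _ _ _ _ => rfl

theorem scaleInvariant_const : ScaleInvariant fun _ : Fin n → Fin n → ℝ => Γ :=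
  fun _ _ _ _ => rfl

theorem mstConsistent_const (k : ℕ) : MSTConsistent k fun _ : Fin n → Fin n → ℝ => Γ :=
  fun _ _ _ _ _ => rfl

theorem mctConsistent_const (k : ℕ) : MCTConsistent k fun _ : Fin n → Fin n → ℝ => Γ :=
  fun _ _ _ _ _ => rfl

end Constant

theorem isKPartition_insert_compl_image_singleton {n : ℕ} (A : Finset (Fin n))
    (hA : Aᶜ.Nonempty) : IsKPartition (insert Aᶜ (A.image singleton)) (#A + 1) := by
  have hcompl : Aᶜ ∉ A.image singleton := by
    intro h
    obtain ⟨i, hi, hAi⟩ := mem_image.mp h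
    exact mem_compl.mp (hAi ▸ mem_singleton_self i) hi
  refine ⟨?_, ?_, ?_, ?_⟩
  · rw [card_insert_of_notMem hcompl, card_image_of_injective _ singleton_injective]
  · simp only [mem_insert, mem_image]
    rintro c (rfl | ⟨i, -, rfl⟩)
    exacts [hA, singleton_nonempty i]
  · simp only [mem_insert, mem_image]
    rintro c (rfl | ⟨i, hi, rfl⟩) c' (rfl | ⟨j, hj, rfl⟩) hne
    · exact absurd rfl hne
    · simpa using hj
    · simpa using hi
    · simpa [eq_comm] using hne
  · refine eq_univ_of_forall fun j => mem_sup.mpr ?_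
    by_cases hj : j ∈ A
    · exact ⟨{j}, mem_insert_of_mem (mem_image_of_mem _ hj), mem_singleton_self j⟩
    · exact ⟨Aᶜ, mem_insert_self _ _, mem_compl.mpr hj⟩

theorem singleton_notMem_constPart {n k : ℕ} (hk : 0 < k) (hkn : k < n) {i : Fin n}
    (hi : (i : ℕ) < n - k + 1) : {i} ∉ constPart n k := by
  intro h
  rcases mem_insert.mp h with hbig | hsmall
  · have hcard := congrArg card hbig
    rw [card_singleton, Fin.card_filter_val_lt,
      min_eq_right (show n - k + 1 ≤ n by omega)] at hcard
    omega
  · obtain ⟨j, hj, hji⟩ := mem_image.mp hsmall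
    rw [singleton_injective hji] at hj
    exact absurd (mem_filter.mp hj).2 (by omega)

/-- The constant partitioning function is Consistent, Scale-Invariant,
MST-Consistent and MCT-Consistent, but (for `n > k ≥ 2`) not k-Rich. -/
theorem constPart_properties {n k : ℕ} (hk : 2 ≤ k) (hkn : k < n) :
    Consistent (fun _ : Fin n → Fin n → ℝ => constPart n k) ∧
    ScaleInvariant (fun _ : Fin n → Fin n → ℝ => constPart n k) ∧
    MSTConsistent k (fun _ : Fin n → Fin n → ℝ => constPart n k) ∧
    MCTConsistent k (fun _ : Fin n → Fin n → ℝ => constPart n k) ∧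
    ¬ KRich k (fun _ : Fin n → Fin n → ℝ => constPart n k) := by
  refine ⟨consistent_const _, scaleInvariant_const _, mstConsistent_const _ _,
    mctConsistent_const _ _, fun hrich => ?_⟩
  obtain ⟨a, ha⟩ : ∃ a : Fin n, (a : ℕ) = k - 1 := ⟨⟨k - 1, by omega⟩, rfl⟩
  let Γ : Finset (Finset (Fin n)) := insert (Iio a)ᶜ ((Iio a).image singleton)
  have hΓ : IsKPartition Γ k := by
    have h := isKPartition_insert_compl_image_singleton (Iio a) ⟨a, by simp⟩
    rwa [Fin.card_Iio, show (a : ℕ) + 1 = k by omega] at h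
  obtain ⟨s, -, hs⟩ := hrich Γ hΓ
  have hzero : ({⟨0, by omega⟩} : Finset (Fin n)) ∈ Γ :=
    mem_insert_of_mem (mem_image_of_mem _ (by simp [Fin.lt_def]; omega))
  exact singleton_notMem_constPart (by omega) hkn (by simp) (hs ▸ hzero)
end
end

section
/- In any maximum spanning tree T of a complete weighted graph G on S, for every pair of vertices u, v, the minimum-weight edge on the unique path in T from u to v has weight equal to the maximum over all u–v paths in G of the minimum edge weight along the path (the widest-path/maximum-bottleneck property). -/
noncomputable section

open scoped Classical

open Finset

/-- The bottleneck of a walk: the minimum similarity among its edges. -/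
def bottleneck {n : ℕ} (s : Fin n → Fin n → ℝ) {G : SimpleGraph (Fin n)}
    {u v : Fin n} (W : G.Walk u v) : WithBot ℝ :=
  (W.darts.map fun d => s d.toProd.1 d.toProd.2).minimum


/-!
Let `ab` be a lightest edge of the tree path `P`. Since `P` is the only `u`–`v` path in the
tree `T`, deleting `ab` from `T` separates `u` from `v`, so every `u`–`v` path `W` of the
complete graph has an edge `xy` crossing this cut. Exchanging `ab` for `xy` yields another
spanning tree, so maximality of `T` forces `s x y ≤ s a b`; hence the bottleneck of `W` is at
most `s a b`, the bottleneck of `P`. Conversely `P` is itself a `u`–`v` path of the complete graph.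
-/

open SimpleGraph

namespace SimpleGraph

variable {V : Type*} {G H H' : SimpleGraph V}

lemma Reachable.deleteEdges_or {z a : V} (b : V) (h : G.Reachable z a) :
    (G.deleteEdges {s(a, b)}).Reachable z a ∨ (G.deleteEdges {s(a, b)}).Reachable z b := by
  obtain ⟨w⟩ := h
  induction w with
  | nil => exact .inl .rfl
  | @cons z y a hzy w ih =>
    by_cases he : s(z, y) = s(a, b)
    · rcases Sym2.eq_iff.mp he with ⟨rfl, -⟩ | ⟨rfl, -⟩
      · exact .inl .rfl
      · exact .inr .rfl
    · have hadj : (G.deleteEdges {s(a, b)}).Adj z y := by simp [hzy, he]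
      exact ih.imp hadj.reachable.trans hadj.reachable.trans

lemma connected_of_le_of_adj_of_not_reachable {a b x y : V} (hle : H ≤ H')
    (hab : ∀ z, H.Reachable z a ∨ H.Reachable z b) (hxy : ¬ H.Reachable x y)
    (hadj : H'.Adj x y) : H'.Connected := by
  have hmono {p q : V} (h : H.Reachable p q) : H'.Reachable p q := h.mono hle
  have hba : H'.Reachable b a := by
    rcases hab x with hx | hx <;> rcases hab y with hy | hy
    · exact absurd (hx.trans hy.symm) hxy
    · exact (hmono hy).symm.trans (hadj.reachable.symm.trans (hmono hx))
    · exact (hmono hx).symm.trans (hadj.reachable.trans (hmono hy))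
    · exact absurd (hx.trans hy.symm) hxy
  refine (connected_iff_exists_forall_reachable H').2 ⟨a, fun z => ?_⟩
  rcases hab z with hz | hz
  · exact (hmono hz).symm
  · exact hba.symm.trans (hmono hz).symm

lemma IsAcyclic.not_reachable_deleteEdges_of_mem_edges (hG : G.IsAcyclic) {u v : V}
    {p : G.Walk u v} (hp : p.IsPath) {e : Sym2 V} (he : e ∈ p.edges) :
    ¬ (G.deleteEdges {e}).Reachable u v := by
  classical
  induction e with | _ a b =>
  rw [reachable_deleteEdges_iff_exists_walk]
  rintro ⟨q, hq⟩
  have hqp : (q.toPath : G.Walk u v) = p :=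
    congrArg Subtype.val ((hG.subsingleton_path u v).elim _ ⟨p, hp⟩)
  exact hq (q.edges_toPath_subset_edges (hqp ▸ he))

end SimpleGraph

section LinearOrder

variable {α : Type*} [LinearOrder α]

lemma min_max_eq_min_max_iff {a b x y : α} :
    (min x y, max x y) = (min a b, max a b) ↔ s(x, y) = s(a, b) := by
  rw [← Sym2.inf_eq_inf_and_sup_eq_sup, Prod.ext_iff]
  rfl

lemma min_max_eq_self {p : α × α} (hp : p.1 ≤ p.2) : (min p.1 p.2, max p.1 p.2) = p := by
  simp [hp]

lemma min_max_apply_of_symm {β : Type*} {s : α → α → β} (hs : ∀ i j, s i j = s j i) (x y : α) :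
    s (min x y) (max x y) = s x y := by
  rcases le_total x y with h | h
  · rw [min_eq_left h, max_eq_right h]
  · rw [min_eq_right h, max_eq_left h, hs]

end LinearOrder

section Bottleneck

variable {n : ℕ} (s : Fin n → Fin n → ℝ) {G : SimpleGraph (Fin n)} {u v : Fin n}

lemma bottleneck_mapLe {G' : SimpleGraph (Fin n)} (h : G ≤ G') (W : G.Walk u v) :
    bottleneck s (W.mapLe h) = bottleneck s W := by
  simp only [bottleneck, Walk.darts_map, List.map_map]
  rfl

/-- `List.minimum` lands in `WithTop ℝ`; read in `WithBot ℝ`, its `⊤` is `⊥`. -/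
lemma bottleneck_eq_bot_of_nil {W : G.Walk u v} (hW : W.Nil) : bottleneck s W = ⊥ := by
  simp only [bottleneck, Walk.darts_eq_nil.mpr hW, List.map_nil, List.minimum_nil]
  rfl

lemma exists_mem_darts_bottleneck_eq {W : G.Walk u v} (hW : ¬ W.Nil) :
    ∃ d ∈ W.darts, bottleneck s W = s d.fst d.snd ∧
      ∀ d' ∈ W.darts, s d.fst d.snd ≤ s d'.fst d'.snd := by
  set l := W.darts.map fun d => s d.toProd.1 d.toProd.2
  have hl : l ≠ [] := by simpa [l, Walk.darts_eq_nil] using hW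
  obtain ⟨m, hm⟩ := WithTop.ne_top_iff_exists.mp (List.minimum_ne_top_of_ne_nil hl)
  obtain ⟨hml, hmin⟩ := List.minimum_eq_coe_iff.mp hm.symm
  obtain ⟨d, hd, rfl⟩ := List.mem_map.mp hml
  exact ⟨d, hd, hm.symm, fun d' hd' => hmin _ (List.mem_map_of_mem hd')⟩

end Bottleneck

section GraphOf

variable {n : ℕ} {E : Finset (Fin n × Fin n)}

lemma graphOf_mono {F : Finset (Fin n × Fin n)} (h : E ⊆ F) : graphOf E ≤ graphOf F := by
  intro x y hxy
  simp only [graphOf, fromRel_adj] at hxy ⊢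
  exact ⟨hxy.1, hxy.2.imp (@h _) (@h _)⟩

lemma graphOf_adj_of_min_max_mem {x y : Fin n} (hxy : x ≠ y) (h : (min x y, max x y) ∈ E) :
    (graphOf E).Adj x y := by
  simp only [graphOf, fromRel_adj]
  rcases le_total x y with hle | hle
  · simp_all
  · simp_all

lemma graphOf_adj_iff (hE : ∀ p ∈ E, p.1 < p.2) {x y : Fin n} :
    (graphOf E).Adj x y ↔ x ≠ y ∧ (min x y, max x y) ∈ E := by
  refine ⟨fun h => ⟨h.ne, ?_⟩, fun h => graphOf_adj_of_min_max_mem h.1 h.2⟩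
  simp only [graphOf, fromRel_adj] at h
  rcases h.2 with h | h
  · rwa [min_max_eq_self (hE _ h).le]
  · rwa [min_comm, max_comm, min_max_eq_self (hE _ h).le]

lemma min_max_notMem_of_not_reachable {x y : Fin n} (h : ¬ (graphOf E).Reachable x y) :
    (min x y, max x y) ∉ E := fun hmem =>
  h (graphOf_adj_of_min_max_mem (by rintro rfl; exact h .rfl) hmem).reachable

lemma graphOf_erase_min_max (hE : ∀ p ∈ E, p.1 < p.2) (a b : Fin n) :
    graphOf (E.erase (min a b, max a b)) = (graphOf E).deleteEdges {s(a, b)} := by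
  ext x y
  rw [deleteEdges_adj, graphOf_adj_iff (fun p hp => hE p (mem_of_mem_erase hp)),
    graphOf_adj_iff hE, mem_erase, Set.mem_singleton_iff, ← min_max_eq_min_max_iff]
  tauto

lemma edgeSet_graphOf (hE : ∀ p ∈ E, p.1 < p.2) :
    (graphOf E).edgeSet = (fun p : Fin n × Fin n => s(p.1, p.2)) '' E := by
  ext e
  induction e with | _ x y =>
  simp only [mem_edgeSet, graphOf, fromRel_adj, Set.mem_image, mem_coe]
  constructor
  · rintro ⟨-, h | h⟩
    · exact ⟨_, h, rfl⟩
    · exact ⟨_, h, Sym2.eq_swap⟩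
  · rintro ⟨p, hp, hpxy⟩
    rcases Sym2.eq_iff.mp hpxy with ⟨rfl, rfl⟩ | ⟨rfl, rfl⟩
    · exact ⟨(hE p hp).ne, .inl hp⟩
    · exact ⟨(hE p hp).ne', .inr hp⟩

lemma nat_card_edgeSet_graphOf (hE : ∀ p ∈ E, p.1 < p.2) :
    Nat.card (graphOf E).edgeSet = E.card := by
  have hinj : Set.InjOn (fun p : Fin n × Fin n => s(p.1, p.2)) E := by
    intro p hp q hq hpq
    rw [← min_max_eq_self (hE p hp).le, ← min_max_eq_self (hE q hq).le]
    exact min_max_eq_min_max_iff.mpr hpq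
  rw [Nat.card_coe_set_eq, edgeSet_graphOf hE, hinj.ncard_image, Set.ncard_coe_finset]

end GraphOf

section SpanningTree

variable {n : ℕ} {T : Finset (Fin n × Fin n)}

lemma IsTreeEdges.isTree (hT : IsTreeEdges T) : (graphOf T).IsTree := by
  obtain ⟨hlt, hcard, hconn⟩ := hT
  have hn : 0 < n := Fin.pos hconn.nonempty.some
  rw [isTree_iff_connected_and_card, nat_card_edgeSet_graphOf hlt, hcard, Nat.card_fin]
  exact ⟨hconn, by omega⟩

lemma IsTreeEdges.insert_erase (hT : IsTreeEdges T) {a b x y : Fin n}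
    (hab : (min a b, max a b) ∈ T)
    (hxy : ¬ (graphOf (T.erase (min a b, max a b))).Reachable x y) :
    IsTreeEdges (insert (min x y, max x y) (T.erase (min a b, max a b))) := by
  obtain ⟨hlt, hcard, hconn⟩ := hT
  have hne : x ≠ y := by rintro rfl; exact hxy .rfl
  have hlt' : ∀ p ∈ insert (min x y, max x y) (T.erase (min a b, max a b)), p.1 < p.2 := by
    simp only [mem_insert, mem_erase]
    rintro p (rfl | ⟨-, hp⟩)
    exacts [min_lt_max.mpr hne, hlt p hp]
  refine ⟨hlt', ?_, ?_⟩
  · rw [card_insert_of_notMem (min_max_notMem_of_not_reachable hxy), card_erase_add_one hab,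
      hcard]
  · refine connected_of_le_of_adj_of_not_reachable (a := a) (b := b)
      (graphOf_mono (subset_insert _ _)) (fun z => ?_) hxy
      ((graphOf_adj_iff hlt').mpr ⟨hne, mem_insert_self _ _⟩)
    rw [graphOf_erase_min_max hlt]
    exact (hconn z a).deleteEdges_or b

/-- The cut property of maximum spanning trees. -/
lemma IsMST.le_of_not_reachable_erase {s : Fin n → Fin n → ℝ} (hs : ∀ i j, s i j = s j i)
    (hT : IsMST s T) {a b x y : Fin n} (hab : (min a b, max a b) ∈ T)
    (hxy : ¬ (graphOf (T.erase (min a b, max a b))).Reachable x y) : s x y ≤ s a b := by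
  have hwt := hT.2 _ (hT.1.insert_erase hab hxy)
  have hsplit := add_sum_erase T (fun p => s p.1 p.2) hab
  rw [wt, sum_insert (min_max_notMem_of_not_reachable hxy), wt, ← hsplit] at hwt
  simp only [min_max_apply_of_symm hs] at hwt
  linarith

end SpanningTree

/-- In a maximum spanning tree, for every pair of vertices the minimum-weight
edge on the unique tree path equals the maximum, over all paths in the complete
graph, of the minimum edge weight along the path. -/
theorem mst_widest_path {n : ℕ} (s : Fin n → Fin n → ℝ) (hs : Sim s)
    (T : Finset (Fin n × Fin n)) (hT : IsMST s T)
    (u v : Fin n) (huv : u ≠ v)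
    (P : (graphOf T).Walk u v) (hP : P.IsPath) :
    IsGreatest {x : WithBot ℝ |
        ∃ W : (⊤ : SimpleGraph (Fin n)).Walk u v, W.IsPath ∧ x = bottleneck s W}
      (bottleneck s P) := by
  refine ⟨⟨P.mapLe le_top, hP.mapLe le_top, (bottleneck_mapLe s le_top P).symm⟩, ?_⟩
  rintro _ ⟨W, -, rfl⟩
  obtain ⟨d, hdP, hPd, -⟩ := exists_mem_darts_bottleneck_eq s (P.not_nil_of_ne huv)
  rw [hPd]
  by_contra! hlt
  have hW : ¬ W.Nil := fun h => by simp [bottleneck_eq_bot_of_nil s h] at hlt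
  obtain ⟨dW, -, hWdW, hdWmin⟩ := exists_mem_darts_bottleneck_eq s hW
  have hd : (min d.fst d.snd, max d.fst d.snd) ∈ T := ((graphOf_adj_iff hT.1.1).mp d.adj).2
  have hsep : ¬ (graphOf (T.erase (min d.fst d.snd, max d.fst d.snd))).Reachable u v := by
    rw [graphOf_erase_min_max hT.1.1]
    exact hT.1.isTree.isAcyclic.not_reachable_deleteEdges_of_mem_edges hP
      (List.mem_map_of_mem hdP)
  obtain ⟨c, hcW, hcu, hcv⟩ :=
    W.exists_boundary_dart {z | (graphOf (T.erase _)).Reachable u z} .rfl hsep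
  have hcut : s c.fst c.snd ≤ s d.fst d.snd :=
    hT.le_of_not_reachable_erase hs.1 hd fun h => hcv (hcu.trans h)
  have hdW : s d.fst d.snd < s dW.fst dW.snd := by exact_mod_cast hWdW ▸ hlt
  linarith [hdWmin c hcW]
end
end
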